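/- In the setting of the real-form Gross–Pitaevskii problem, let v = (v₁; v₂) ∈ ℝ^{2m} with vᵀv = 1, σ ∈ ℝ, and define C := A₀ + β·[ [3·diag(v₁)² + diag(v₂)², 2·diag(v₁)·diag(v₂)], [2·diag(v₁)·diag(v₂), diag(v₁)² + 3·diag(v₂)²] ] − σI. Assume C is invertible, set u₁ := C⁻¹v and w := 2β C⁻¹ (B(v)v), and assume vᵀw ≠ 1. Then, with u₂ := (vᵀu₁/(1 − vᵀw)) w, one has (J(v) − σI)(u₁ + u₂) = v; in particular, if J(v) − σI is invertible then (J(v) − σI)⁻¹v = u₁ + u₂. -/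
import Mathlib


open Matrix

/-- `D(v) = diag(v₁)² + diag(v₂)²`. -/
noncomputable def gpeD {m : ℕ} (v : Fin m ⊕ Fin m → ℝ) : Matrix (Fin m) (Fin m) ℝ :=
  (Matrix.diagonal fun i => v (Sum.inl i)) ^ 2 + (Matrix.diagonal fun i => v (Sum.inr i)) ^ 2

/-- `B(v) = blockdiag(D(v), D(v))`. -/
noncomputable def gpeB {m : ℕ} (v : Fin m ⊕ Fin m → ℝ) :
    Matrix (Fin m ⊕ Fin m) (Fin m ⊕ Fin m) ℝ :=
  Matrix.fromBlocks (gpeD v) 0 0 (gpeD v)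

/-- The Jacobian of `v ↦ A(v)v` for the real-form Gross–Pitaevskii problem, where
`A(v) = A₀ + (β/(vᵀv)) B(v)`. -/
noncomputable def gpeJ {m : ℕ} (A₀ : Matrix (Fin m ⊕ Fin m) (Fin m ⊕ Fin m) ℝ) (β : ℝ)
    (v : Fin m ⊕ Fin m → ℝ) : Matrix (Fin m ⊕ Fin m) (Fin m ⊕ Fin m) ℝ :=
  A₀ + (β / (v ⬝ᵥ v)) • Matrix.fromBlocks
      ((3 : ℝ) • (Matrix.diagonal fun i => v (Sum.inl i)) ^ 2 +
        (Matrix.diagonal fun i => v (Sum.inr i)) ^ 2)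
      ((2 : ℝ) • ((Matrix.diagonal fun i => v (Sum.inl i)) *
        (Matrix.diagonal fun i => v (Sum.inr i))))
      ((2 : ℝ) • ((Matrix.diagonal fun i => v (Sum.inl i)) *
        (Matrix.diagonal fun i => v (Sum.inr i))))
      ((Matrix.diagonal fun i => v (Sum.inl i)) ^ 2 +
        (3 : ℝ) • (Matrix.diagonal fun i => v (Sum.inr i)) ^ 2)
    - (2 * β / (v ⬝ᵥ v) ^ 2) • Matrix.vecMulVec (gpeB v *ᵥ v) v

lemma vecMulVec_mulVec' {n : Type*} [Fintype n] (a v x : n → ℝ) :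
    Matrix.vecMulVec a v *ᵥ x = (v ⬝ᵥ x) • a := by
  ext i
  simp only [Matrix.mulVec, Matrix.vecMulVec_apply, dotProduct, Pi.smul_apply, smul_eq_mul,
    Finset.mul_sum, Function.comp]
  rw [Finset.sum_mul]
  exact Finset.sum_congr rfl fun j _ => by ring

/-- Sherman–Morrison solution of `(J(v) − σI)x = v` for the real-form
Gross–Pitaevskii problem: with `u₁ = C⁻¹v`, `w = 2β C⁻¹(B(v)v)`, `vᵀw ≠ 1`, and
`u₂ = (vᵀu₁/(1 − vᵀw)) w`, one has `(J(v) − σI)(u₁ + u₂) = v`; in particular, if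
`J(v) − σI` is invertible then `(J(v) − σI)⁻¹v = u₁ + u₂`. -/
theorem stmt19 {m : ℕ} (hm : 1 ≤ m)
    (A₀ : Matrix (Fin m ⊕ Fin m) (Fin m ⊕ Fin m) ℝ) (β σ : ℝ)
    (v : Fin m ⊕ Fin m → ℝ) (hv : v ≠ 0) (h1 : v ⬝ᵥ v = 1)
    (C : Matrix (Fin m ⊕ Fin m) (Fin m ⊕ Fin m) ℝ)
    (hC : C = A₀ + β • Matrix.fromBlocks
        ((3 : ℝ) • (Matrix.diagonal fun i => v (Sum.inl i)) ^ 2 +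
          (Matrix.diagonal fun i => v (Sum.inr i)) ^ 2)
        ((2 : ℝ) • ((Matrix.diagonal fun i => v (Sum.inl i)) *
          (Matrix.diagonal fun i => v (Sum.inr i))))
        ((2 : ℝ) • ((Matrix.diagonal fun i => v (Sum.inl i)) *
          (Matrix.diagonal fun i => v (Sum.inr i))))
        ((Matrix.diagonal fun i => v (Sum.inl i)) ^ 2 +
          (3 : ℝ) • (Matrix.diagonal fun i => v (Sum.inr i)) ^ 2)
      - σ • (1 : Matrix (Fin m ⊕ Fin m) (Fin m ⊕ Fin m) ℝ))
    (hCinv : IsUnit C)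
    (u₁ w u₂ : Fin m ⊕ Fin m → ℝ)
    (hu₁ : u₁ = C⁻¹ *ᵥ v)
    (hw : w = (2 * β) • (C⁻¹ *ᵥ (gpeB v *ᵥ v)))
    (hvw : v ⬝ᵥ w ≠ 1)
    (hu₂ : u₂ = ((v ⬝ᵥ u₁) / (1 - v ⬝ᵥ w)) • w) :
    (gpeJ A₀ β v - σ • (1 : Matrix (Fin m ⊕ Fin m) (Fin m ⊕ Fin m) ℝ)) *ᵥ (u₁ + u₂) = v ∧
    (IsUnit (gpeJ A₀ β v - σ • (1 : Matrix (Fin m ⊕ Fin m) (Fin m ⊕ Fin m) ℝ)) →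
      (gpeJ A₀ β v - σ • (1 : Matrix (Fin m ⊕ Fin m) (Fin m ⊕ Fin m) ℝ))⁻¹ *ᵥ v = u₁ + u₂) := by
  
  have hdet : IsUnit C.det := (Matrix.isUnit_iff_isUnit_det C).mp hCinv
  have hCi : C * C⁻¹ = 1 := Matrix.mul_nonsing_inv C hdet
  set b := gpeB v *ᵥ v with hb
  have hCu₁ : C *ᵥ u₁ = v := by
    rw [hu₁, Matrix.mulVec_mulVec, hCi, Matrix.one_mulVec]
  have hCw : C *ᵥ w = (2 * β) • b := by
    rw [hw, Matrix.mulVec_smul, Matrix.mulVec_mulVec, hCi, Matrix.one_mulVec]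
  set M := gpeJ A₀ β v - σ • (1 : Matrix (Fin m ⊕ Fin m) (Fin m ⊕ Fin m) ℝ) with hM
  have hMeq : M = C - (2 * β) • Matrix.vecMulVec b v := by
    rw [hM, gpeJ, hC, h1]
    simp only [div_one, one_pow]
    abel
  have key : ∀ x : Fin m ⊕ Fin m → ℝ,
      M *ᵥ x = C *ᵥ x - ((2 * β) * (v ⬝ᵥ x)) • b := by
    intro x
    rw [hMeq, Matrix.sub_mulVec, Matrix.smul_mulVec, vecMulVec_mulVec', smul_smul]
  set t := (v ⬝ᵥ u₁) / (1 - v ⬝ᵥ w) with ht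
  have hne : 1 - v ⬝ᵥ w ≠ 0 := sub_ne_zero.mpr (Ne.symm hvw)
  have hmain : M *ᵥ (u₁ + u₂) = v := by
    rw [key, Matrix.mulVec_add, hCu₁, hu₂, Matrix.mulVec_smul, hCw]
    have hdp : v ⬝ᵥ (u₁ + t • w) = v ⬝ᵥ u₁ + t * (v ⬝ᵥ w) := by
      simp [dotProduct_add, dotProduct_smul, smul_eq_mul]
    rw [hdp]
    have ht' : t * (1 - v ⬝ᵥ w) = v ⬝ᵥ u₁ := by
      rw [ht]; field_simp
    have hthis : t • (2 * β) • b - (2 * β * (v ⬝ᵥ u₁ + t * (v ⬝ᵥ w))) • b = 0 := by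
      rw [smul_smul, ← sub_smul]
      have hz : t * (2 * β) - 2 * β * (v ⬝ᵥ u₁ + t * (v ⬝ᵥ w)) = 0 := by
        linear_combination (2 * β) * ht'
      rw [hz, zero_smul]
    rw [add_sub_assoc, hthis, add_zero]
  refine ⟨hmain, fun hMu => ?_⟩
  have hMi : M⁻¹ * M = 1 := Matrix.nonsing_inv_mul M ((Matrix.isUnit_iff_isUnit_det M).mp hMu)
  calc M⁻¹ *ᵥ v = M⁻¹ *ᵥ (M *ᵥ (u₁ + u₂)) := by rw [hmain]
    _ = u₁ + u₂ := by rw [Matrix.mulVec_mulVec, hMi, Matrix.one_mulVec]
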